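/- Let A be a unital associative commutative k-algebra and let C be a k-module together with an alternating k-bilinear map ⟪·,·⟫ : A × A → C satisfying ⟪a, bc⟫ + ⟪b, ca⟫ + ⟪c, ab⟫ = 0 for all a,b,c ∈ A. For n ≥ 2, the map τ : sl(n,A) × sl(n,A) → C defined by τ(x,y) = Σ_{i,j} ⟪x_{ij}, y_{ji}⟫ is a 2-cocycle on the Lie algebra sl(n,A), i.e., τ is bilinear, alternating, and satisfies τ(x,[y,z]) + τ(y,[z,x]) + τ(z,[x,y]) = 0. -/

import Mathlib

noncomputable section

open Function

universe u

variable (k : Type u) [CommRing k] (A : Type u) [CommRing A] [Algebra k A]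

/-- The 2-cochain `τ(x,y) = ∑_{i,j} ⟪x_{ij}, y_{ji}⟫` on `n × n` matrices, for an
alternating bilinear form `b = ⟪·,·⟫` on `A`. -/
def tauC {C : Type u} [AddCommGroup C] [Module k C] (b : A →ₗ[k] A →ₗ[k] C) {n : ℕ}
    (x y : Matrix (Fin n) (Fin n) A) : C :=
  ∑ i, ∑ j, b (x i j) (y j i)


/-!
Everything is a finite index computation. Bilinearity is inherited entrywise from `⟪·,·⟫`, and
alternation comes from pairing the `(i, j)` and `(j, i)` terms of `τ(x, x)`. For the cocycle
identity, `τ(x, [y, z]) = τ(x, yz) - τ(x, zy)` and `τ(x, yz) = ∑ ⟪x_{ij}, y_{jl} z_{li}⟫`; after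
a cyclic renaming of `(i, j, l)` the three terms `τ(x, yz) + τ(y, zx) + τ(z, xy)` sum to
`∑ (⟪a, cd⟫ + ⟪c, da⟫ + ⟪d, ab⟫)` with `a = x_{ij}`, `c = y_{jl}`, `d = z_{li}`, which vanishes.
-/

open Finset

theorem Finset.sum_sum_eq_zero_of_antisymm {ι M : Type*} [Fintype ι] [AddCommMonoid M]
    (f : ι → ι → M) (hdiag : ∀ i, f i i = 0) (hanti : ∀ i j, f i j + f j i = 0) :
    ∑ i, ∑ j, f i j = 0 := by
  rw [← Finset.sum_product']
  refine sum_involution (fun p _ => p.swap) (fun p _ => hanti p.1 p.2) ?_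
    (fun p _ => mem_univ _) (fun p _ => p.swap_swap)
  rintro ⟨i, j⟩ _ hne hswap
  obtain rfl : j = i := congrArg Prod.fst hswap
  exact hne (hdiag j)

theorem Finset.sum_sum_sum_rotate {ι M : Type*} [Fintype ι] [AddCommMonoid M]
    (f : ι → ι → ι → M) : ∑ i, ∑ j, ∑ l, f i j l = ∑ i, ∑ j, ∑ l, f l i j := by
  rw [sum_comm]
  exact sum_congr rfl fun _ _ => sum_comm

section Cochain

variable {k A} {C : Type u} [AddCommGroup C] [Module k C] (b : A →ₗ[k] A →ₗ[k] C) {n : ℕ}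
  (x x' y y' z : Matrix (Fin n) (Fin n) A)

theorem tauC_add_left : tauC k A b (x + x') y = tauC k A b x y + tauC k A b x' y := by
  simp [tauC, sum_add_distrib]

theorem tauC_add_right : tauC k A b x (y + y') = tauC k A b x y + tauC k A b x y' := by
  simp [tauC, sum_add_distrib]

theorem tauC_sub_right : tauC k A b x (y - y') = tauC k A b x y - tauC k A b x y' := by
  simp [tauC, sum_sub_distrib]

theorem tauC_smul_left (c : k) : tauC k A b (c • x) y = c • tauC k A b x y := by
  simp [tauC, smul_sum]

theorem tauC_smul_right (c : k) : tauC k A b x (c • y) = c • tauC k A b x y := by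
  simp [tauC, smul_sum]

theorem tauC_mul_right :
    tauC k A b x (y * z) = ∑ i, ∑ j, ∑ l, b (x i j) (y j l * z l i) := by
  simp [tauC, Matrix.mul_apply]

variable {b}

theorem tauC_self (hb : b.IsAlt) : tauC k A b x x = 0 :=
  sum_sum_eq_zero_of_antisymm _ (fun i => hb.self_eq_zero _)
    (fun i j => by rw [← hb.neg (x i j), add_neg_cancel])

theorem tauC_add_tauC_swap (hb : b.IsAlt) : tauC k A b x y + tauC k A b y x = 0 := by
  have polarized := tauC_self (x + y) hb
  rwa [tauC_add_left, tauC_add_right, tauC_add_right, tauC_self x hb, tauC_self y hb, zero_add,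
    add_zero] at polarized

theorem tauC_mul_right_cyclic (hcyc : ∀ a c d : A, b a (c * d) + b c (d * a) + b d (a * c) = 0) :
    tauC k A b x (y * z) + tauC k A b y (z * x) + tauC k A b z (x * y) = 0 := by
  calc _ = ∑ i, ∑ j, ∑ l,
        (b (x i j) (y j l * z l i) + b (y j l) (z l i * x i j) + b (z l i) (x i j * y j l)) := by
        rw [tauC_mul_right, tauC_mul_right, tauC_mul_right,
          sum_sum_sum_rotate (fun i j l => b (z i j) (x j l * y l i)),
          ← sum_sum_sum_rotate (fun i j l => b (y j l) (z l i * x i j))]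
        simp only [sum_add_distrib]
    _ = 0 := by simp only [hcyc, sum_const_zero]

theorem tauC_lie_cyclic (hcyc : ∀ a c d : A, b a (c * d) + b c (d * a) + b d (a * c) = 0) :
    tauC k A b x ⁅y, z⁆ + tauC k A b y ⁅z, x⁆ + tauC k A b z ⁅x, y⁆ = 0 := by
  simp only [Ring.lie_def, tauC_sub_right]
  linear_combination (norm := abel)
    tauC_mul_right_cyclic x y z hcyc - tauC_mul_right_cyclic x z y hcyc

end Cochain

theorem statement15 (C : Type u) [AddCommGroup C] [Module k C] (b : A →ₗ[k] A →ₗ[k] C)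
    (halt : ∀ a : A, b a a = 0)
    (hcyc : ∀ a c d : A, b a (c * d) + b c (d * a) + b d (a * c) = 0)
    (n : ℕ) :
    (∀ x x' y : Matrix (Fin n) (Fin n) A,
      Matrix.trace x = 0 → Matrix.trace x' = 0 → Matrix.trace y = 0 →
        tauC k A b (x + x') y = tauC k A b x y + tauC k A b x' y) ∧
    (∀ (x y y' : Matrix (Fin n) (Fin n) A),
      Matrix.trace x = 0 → Matrix.trace y = 0 → Matrix.trace y' = 0 →
        tauC k A b x (y + y') = tauC k A b x y + tauC k A b x y') ∧
    (∀ (c : k) (x y : Matrix (Fin n) (Fin n) A),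
      Matrix.trace x = 0 → Matrix.trace y = 0 →
        tauC k A b (c • x) y = c • tauC k A b x y ∧
        tauC k A b x (c • y) = c • tauC k A b x y) ∧
    (∀ x : Matrix (Fin n) (Fin n) A, Matrix.trace x = 0 → tauC k A b x x = 0) ∧
    (∀ x y : Matrix (Fin n) (Fin n) A, Matrix.trace x = 0 → Matrix.trace y = 0 →
        tauC k A b x y + tauC k A b y x = 0) ∧
    (∀ x y z : Matrix (Fin n) (Fin n) A,
      Matrix.trace x = 0 → Matrix.trace y = 0 → Matrix.trace z = 0 →
        tauC k A b x ⁅y, z⁆ + tauC k A b y ⁅z, x⁆ + tauC k A b z ⁅x, y⁆ = 0) :=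
  ⟨fun x x' y _ _ _ => tauC_add_left b x x' y,
    fun x y y' _ _ _ => tauC_add_right b x y y',
    fun c x y _ _ => ⟨tauC_smul_left b x y c, tauC_smul_right b x y c⟩,
    fun x _ => tauC_self x halt,
    fun x y _ _ => tauC_add_tauC_swap x y halt,
    fun x y z _ _ _ => tauC_lie_cyclic x y z hcyc⟩
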